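/- arXiv:2410.23925 — 3 statements merged into one kernel-verified Lean document; each statement's English description precedes it below -/
import Mathlib

section
/- For ε > 0, the function u^ε(x,y) = (e^y + e^{−y})/(e^ε − e^{−ε}) + 1 solves the boundary value problem −u_{yy} + u = 1 in (0,1) × (0,ε), u_y(x,ε) = 1, −u_y(x,0) = 0, u_x(0,y) = 0, u_x(1,y) = 0; moreover sup over the domain of u^ε tends to +∞ as ε → 0⁺ (indeed u^ε(x,0) = 2/(e^ε − e^{−ε}) + 1 → ∞). -/
/-! Since `e^y + e^{-y} = 2 cosh y` and `e^ε - e^{-ε} = 2 sinh ε`, the function is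
`u^ε(x,y) = cosh y / sinh ε + 1`. It does not depend on `x`, its `y`-derivative is
`sinh y / sinh ε`, and `cosh'' = cosh` gives `-u_{yy} + u = 1`. Finally
`u^ε(x,0) = 1 / sinh ε + 1` blows up because `sinh ε → 0⁺` as `ε → 0⁺`. -/

open Real Filter Topology

lemma exp_add_exp_neg_div_exp_sub_exp_neg (y a : ℝ) :
    (exp y + exp (-y)) / (exp a - exp (-a)) = cosh y / sinh a := by
  rw [cosh_eq, sinh_eq, div_div_div_cancel_right₀ two_ne_zero]

lemma deriv_cosh_div_add_const (s c : ℝ) :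
    deriv (fun y => cosh y / s + c) = fun y => sinh y / s := by
  funext y
  exact (((hasDerivAt_cosh y).div_const s).add_const c).deriv

lemma deriv_sinh_div (s : ℝ) : deriv (fun y => sinh y / s) = fun y => cosh y / s := by
  funext y
  exact ((hasDerivAt_sinh y).div_const s).deriv

lemma tendsto_sinh_nhdsGT_zero : Tendsto sinh (𝓝[>] 0) (𝓝[>] 0) := by
  have := continuous_sinh.continuousWithinAt.tendsto_nhdsWithin (x := 0)
    (s := Set.Ioi 0) (t := Set.Ioi 0) fun _ hx => sinh_pos_iff.mpr hx
  rwa [sinh_zero] at this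

lemma tendsto_inv_sinh_nhdsGT_zero : Tendsto (fun ε => (sinh ε)⁻¹) (𝓝[>] 0) atTop :=
  tendsto_inv_nhdsGT_zero.comp tendsto_sinh_nhdsGT_zero

/-- The function `u^ε(x,y) = (e^y + e^{−y})/(e^ε − e^{−ε}) + 1` solves
`−u_{yy} + u = 1` in `(0,1)×(0,ε)` with `u_y(x,ε)=1`, `−u_y(x,0)=0`,
`u_x(0,y)=0`, `u_x(1,y)=0`, and `u^ε(x,0) = 2/(e^ε−e^{−ε}) + 1 → +∞` as `ε → 0⁺`. -/
theorem stmt_3 (f : ℝ → ℝ → ℝ → ℝ)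
    (hf : ∀ ε x y, f ε x y =
      (Real.exp y + Real.exp (-y)) / (Real.exp ε - Real.exp (-ε)) + 1) :
    ∀ ε > 0,
      (∀ x y : ℝ, -(deriv (deriv (fun y' => f ε x y')) y) + f ε x y = 1) ∧
      (∀ x : ℝ, deriv (fun y' => f ε x y') ε = 1) ∧
      (∀ x : ℝ, -(deriv (fun y' => f ε x y') 0) = 0) ∧
      (∀ y : ℝ, deriv (fun x' => f ε x' y) 0 = 0) ∧
      (∀ y : ℝ, deriv (fun x' => f ε x' y) 1 = 0) ∧
      (∀ x : ℝ, f ε x 0 = 2 / (Real.exp ε - Real.exp (-ε)) + 1) ∧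
      (∀ x : ℝ, Filter.Tendsto (fun ε' => f ε' x 0)
        (nhdsWithin 0 (Set.Ioi 0)) Filter.atTop) := by
  intro ε hε
  have hf0 : ∀ x, f ε x 0 = 2 / (exp ε - exp (-ε)) + 1 := fun x => by
    rw [hf]; norm_num [one_add_one_eq_two]
  obtain rfl : f = fun ε _ y => cosh y / sinh ε + 1 := by
    funext ε x y
    rw [hf, exp_add_exp_neg_div_exp_sub_exp_neg]
  have hsinh : sinh ε ≠ 0 := (sinh_pos_iff.mpr hε).ne'
  refine ⟨fun x y => ?_, fun x => ?_, fun x => ?_, fun y => ?_, fun y => ?_, hf0,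
    fun x => ?_⟩
  · rw [deriv_cosh_div_add_const, deriv_sinh_div]
    ring
  · rw [deriv_cosh_div_add_const]
    exact div_self hsinh
  · simp only [deriv_cosh_div_add_const, sinh_zero, zero_div, neg_zero]
  · exact deriv_const 0 _
  · exact deriv_const 1 _
  · simpa [cosh_zero] using tendsto_atTop_add_const_right _ 1 tendsto_inv_sinh_nhdsGT_zero
end

section
/- Let σ̃ ∈ M(k,N), b̃ ∈ ℝ^N with tr(σ̃ᵀσ̃) ≤ B and |b̃| ≤ B, and suppose tr(σ̃ᵀσ̃ (x−y)⊗(x−y)) > r₀²δ² and |x − y| ≤ r₁. Then with ψ_t as above, −tr(σ̃ᵀσ̃ D²ψ_t(x)) − b̃·Dψ_t(x) ≥ tC_t e^{t(r₀² − |x−y|²)}(4r₀²δ²t − 2B − 2r₁B). In particular, if 4r₀²δ²t − 2(1+r₁)B ≥ 1 and |x−y| ≤ r₁, then −tr(σ̃ᵀσ̃ D²ψ_t(x)) − b̃·Dψ_t(x) ≥ tC_t e^{t(r₀² − r₁²)} = t. -/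
open Matrix
open scoped RealInnerProductSpace

/-!
With `E = C_t e^{t(r₀² − |x−y|²)}` and `v = x − y`, the operator applied to the barrier equals
`t E (4t tr(σ̃ᵀσ̃ v⊗v) − 2 tr(σ̃ᵀσ̃) − 2 b̃·v)`, exactly. The three terms are bounded by the
non-degeneracy hypothesis, the trace bound and Cauchy–Schwarz. For the second claim, `E ≥ 1`
because `|v| ≤ r₁` makes the exponent `t(r₁² − |v|²)` of `E` non-negative.
-/

lemma Matrix.trace_mul_smul_sub_smul {n R : Type*} [Fintype n] [DecidableEq n] [CommRing R]
    (A M : Matrix n n R) (c a b : R) :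
    (A * (c • (a • (1 : Matrix n n R) - b • M))).trace
      = c * (a * A.trace - b * (A * M).trace) := by
  simp only [Matrix.mul_smul, Matrix.mul_sub, Matrix.mul_one, Matrix.trace_smul,
    Matrix.trace_sub, smul_eq_mul]

lemma real_inner_le_mul_of_norm_le {E : Type*} [NormedAddCommGroup E] [InnerProductSpace ℝ E]
    {b v : E} {B r : ℝ} (hb : ‖b‖ ≤ B) (hv : ‖v‖ ≤ r) : ⟪b, v⟫ ≤ r * B :=
  calc ⟪b, v⟫ ≤ ‖b‖ * ‖v‖ := real_inner_le_norm b v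
    _ ≤ B * r := mul_le_mul hb hv (norm_nonneg v) ((norm_nonneg b).trans hb)
    _ = r * B := mul_comm B r

lemma one_le_exp_mul_exp_of_norm_le {E : Type*} [SeminormedAddCommGroup E] {v : E}
    {r₀ r₁ t : ℝ} (ht : 0 ≤ t) (hv : ‖v‖ ≤ r₁) :
    1 ≤ Real.exp (t * (r₁ ^ 2 - r₀ ^ 2)) * Real.exp (t * (r₀ ^ 2 - ‖v‖ ^ 2)) := by
  rw [← Real.exp_add]
  apply Real.one_le_exp
  have : ‖v‖ ^ 2 ≤ r₁ ^ 2 := pow_le_pow_left₀ (norm_nonneg v) hv 2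
  nlinarith

theorem stmt_11_general {k N : ℕ} (σ : Matrix (Fin k) (Fin N) ℝ)
    (btil x y : EuclideanSpace ℝ (Fin N))
    (B δ r₀ r₁ t : ℝ)
    (ht : 0 < t)
    (Ct : ℝ) (hCt : Ct = Real.exp (t * (r₁ ^ 2 - r₀ ^ 2)))
    (htr : (σᵀ * σ).trace ≤ B) (hbB : ‖btil‖ ≤ B)
    (hlow : r₀ ^ 2 * δ ^ 2 <
      (σᵀ * σ * Matrix.of (fun i j => (x - y) i * (x - y) j)).trace)
    (hxy : ‖x - y‖ ≤ r₁)
    (Dψ : EuclideanSpace ℝ (Fin N))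
    (hDψ : Dψ = (2 * t * Ct * Real.exp (t * (r₀ ^ 2 - ‖x - y‖ ^ 2))) • (x - y))
    (Hψ : Matrix (Fin N) (Fin N) ℝ)
    (hHψ : Hψ = (Ct * Real.exp (t * (r₀ ^ 2 - ‖x - y‖ ^ 2))) •
      ((2 * t) • (1 : Matrix (Fin N) (Fin N) ℝ) -
        (4 * t ^ 2) • Matrix.of (fun i j => (x - y) i * (x - y) j))) :
    (t * Ct * Real.exp (t * (r₀ ^ 2 - ‖x - y‖ ^ 2)) *
        (4 * r₀ ^ 2 * δ ^ 2 * t - 2 * B - 2 * r₁ * B)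
      ≤ -(σᵀ * σ * Hψ).trace - ⟪btil, Dψ⟫) ∧
    (1 ≤ 4 * r₀ ^ 2 * δ ^ 2 * t - 2 * (1 + r₁) * B →
      t ≤ -(σᵀ * σ * Hψ).trace - ⟪btil, Dψ⟫) := by
  set E := Ct * Real.exp (t * (r₀ ^ 2 - ‖x - y‖ ^ 2))
  have hE : 1 ≤ E := by
    simpa only [E, hCt] using one_le_exp_mul_exp_of_norm_le ht.le hxy
  have hvalue : -(σᵀ * σ * Hψ).trace - ⟪btil, Dψ⟫ = t * E * (4 * t *
      (σᵀ * σ * Matrix.of (fun i j => (x - y) i * (x - y) j)).trace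
        - 2 * (σᵀ * σ).trace - 2 * ⟪btil, x - y⟫) := by
    rw [hHψ, Matrix.trace_mul_smul_sub_smul, hDψ, real_inner_smul_right]
    ring
  have hdrift : ⟪btil, x - y⟫ ≤ r₁ * B := real_inner_le_mul_of_norm_le hbB hxy
  have hbound : t * E * (4 * r₀ ^ 2 * δ ^ 2 * t - 2 * B - 2 * r₁ * B)
      ≤ -(σᵀ * σ * Hψ).trace - ⟪btil, Dψ⟫ := by
    rw [hvalue]
    gcongr t * E * ?_
    linarith [mul_lt_mul_of_pos_left hlow ht]
  refine ⟨by simpa only [E, mul_assoc] using hbound, fun h1 => le_trans ?_ hbound⟩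
  have hrate : 1 ≤ 4 * r₀ ^ 2 * δ ^ 2 * t - 2 * B - 2 * r₁ * B := by linarith
  calc t = t * 1 * 1 := by ring
    _ ≤ t * E * (4 * r₀ ^ 2 * δ ^ 2 * t - 2 * B - 2 * r₁ * B) := by gcongr

/-- Barrier estimate: if `tr(σ̃ᵀσ̃) ≤ B`, `|b̃| ≤ B`,
`tr(σ̃ᵀσ̃ (x−y)⊗(x−y)) > r₀²δ²` and `|x−y| ≤ r₁`, then
`−tr(σ̃ᵀσ̃ D²ψ_t(x)) − b̃·Dψ_t(x) ≥ tC_t e^{t(r₀²−|x−y|²)}(4r₀²δ²t − 2B − 2r₁B)`;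
and if `4r₀²δ²t − 2(1+r₁)B ≥ 1` it is `≥ t`. -/
theorem stmt_11 {k N : ℕ} (σ : Matrix (Fin k) (Fin N) ℝ)
    (btil x y : EuclideanSpace ℝ (Fin N))
    (B δ r₀ r₁ t : ℝ)
    (hB : 0 < B) (hδ : 0 < δ) (h0 : 0 < r₀) (h01 : r₀ < r₁) (ht : 0 < t)
    (Ct : ℝ) (hCt : Ct = Real.exp (t * (r₁ ^ 2 - r₀ ^ 2)))
    (htr : (σᵀ * σ).trace ≤ B) (hbB : ‖btil‖ ≤ B)
    (hlow : r₀ ^ 2 * δ ^ 2 <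
      (σᵀ * σ * Matrix.of (fun i j => (x - y) i * (x - y) j)).trace)
    (hxy : ‖x - y‖ ≤ r₁)
    (Dψ : EuclideanSpace ℝ (Fin N))
    (hDψ : Dψ = (2 * t * Ct * Real.exp (t * (r₀ ^ 2 - ‖x - y‖ ^ 2))) • (x - y))
    (Hψ : Matrix (Fin N) (Fin N) ℝ)
    (hHψ : Hψ = (Ct * Real.exp (t * (r₀ ^ 2 - ‖x - y‖ ^ 2))) •
      ((2 * t) • (1 : Matrix (Fin N) (Fin N) ℝ) -
        (4 * t ^ 2) • Matrix.of (fun i j => (x - y) i * (x - y) j))) :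
    (t * Ct * Real.exp (t * (r₀ ^ 2 - ‖x - y‖ ^ 2)) *
        (4 * r₀ ^ 2 * δ ^ 2 * t - 2 * B - 2 * r₁ * B)
      ≤ -(σᵀ * σ * Hψ).trace - ⟪btil, Dψ⟫) ∧
    (1 ≤ 4 * r₀ ^ 2 * δ ^ 2 * t - 2 * (1 + r₁) * B →
      t ≤ -(σᵀ * σ * Hψ).trace - ⟪btil, Dψ⟫) :=
  stmt_11_general σ btil x y B δ r₀ r₁ t ht Ct hCt htr hbB hlow hxy Dψ hDψ Hψ hHψ
end

section
/- Let Ω_ε be the thin domain over Ω with profiles εg⁻ < εg⁺. Suppose ψ̄ + M and ψ̲ − M are classical strict super- and subsolution barriers satisfying: ψ̲ − M ≤ ψ̄ + M on cl Ω_ε, and on cl Ω_ε, F(D²(ψ̄+M), D(ψ̄+M), ψ̄+M, ·) > 0 and F(D²(ψ̲−M), D(ψ̲−M), ψ̲−M, ·) < 0, with strict boundary inequalities γ^±·D(ψ̄+M) > β^± and γ^±·D(ψ̲−M) < β^± on the top/bottom boundaries and the corresponding lateral inequalities. If u is any viscosity solution to the boundary value problem and the maximum principle argument applies (F proper with constant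 α > 0), then ψ̲ − M ≤ u ≤ ψ̄ + M on cl Ω_ε; in particular sup |u| ≤ max(‖ψ̄‖_∞, ‖ψ̲‖_∞) + M. -/
open Matrix Set

/-- First-order derivative vector (gradient) of a test function on `ℝ^n`. -/
noncomputable def gradVec {n : ℕ} (φ : (Fin n → ℝ) → ℝ) (z : Fin n → ℝ) :
    Fin n → ℝ :=
  fun i => fderiv ℝ φ z (Pi.single i 1)

/-- Hessian matrix of a test function on `ℝ^n`. -/
noncomputable def hessMat {n : ℕ} (φ : (Fin n → ℝ) → ℝ) (z : Fin n → ℝ) :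
    Matrix (Fin n) (Fin n) ℝ :=
  Matrix.of fun i j =>
    fderiv ℝ (fun w => fderiv ℝ φ w (Pi.single j 1)) z (Pi.single i 1)

/-- Viscosity subsolution of the boundary value problem on the thin domain
`K = cl Ω_ε`, with interior `Kint`, top boundary `ΓT`, bottom boundary `ΓB`,
lateral boundary `ΓL`, oblique conditions `γ^±·Du = β^±` on top/bottom, and an
abstract lateral condition `Blat` (taking the value of `u`, the gradient of the
test function, and the point). At a maximum point of `u − φ` the interior
inequality or the appropriate boundary alternative(s) must hold, including the
corner alternatives. -/
def IsViscSubsol {n : ℕ} (K Kint ΓT ΓB ΓL : Set (Fin n → ℝ))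
    (F : Matrix (Fin n) (Fin n) ℝ → (Fin n → ℝ) → ℝ → (Fin n → ℝ) → ℝ)
    (γT γB : (Fin n → ℝ) → (Fin n → ℝ)) (βT βB : (Fin n → ℝ) → ℝ)
    (Blat : ℝ → (Fin n → ℝ) → (Fin n → ℝ) → Prop)
    (u : (Fin n → ℝ) → ℝ) : Prop :=
  UpperSemicontinuousOn u K ∧
  ∀ φ : (Fin n → ℝ) → ℝ, ContDiff ℝ 2 φ →
    ∀ zh ∈ K, (∀ z ∈ K, u z - φ z ≤ u zh - φ zh) →
      (zh ∈ Kint → F (hessMat φ zh) (gradVec φ zh) (u zh) zh ≤ 0) ∧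
      (zh ∈ ΓT \ ΓL → F (hessMat φ zh) (gradVec φ zh) (u zh) zh ≤ 0 ∨
        γT zh ⬝ᵥ gradVec φ zh ≤ βT zh) ∧
      (zh ∈ ΓB \ ΓL → F (hessMat φ zh) (gradVec φ zh) (u zh) zh ≤ 0 ∨
        γB zh ⬝ᵥ gradVec φ zh ≤ βB zh) ∧
      (zh ∈ ΓL \ (ΓT ∪ ΓB) → F (hessMat φ zh) (gradVec φ zh) (u zh) zh ≤ 0 ∨
        Blat (u zh) (gradVec φ zh) zh) ∧
      (zh ∈ ΓL ∩ ΓT → F (hessMat φ zh) (gradVec φ zh) (u zh) zh ≤ 0 ∨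
        Blat (u zh) (gradVec φ zh) zh ∨ γT zh ⬝ᵥ gradVec φ zh ≤ βT zh) ∧
      (zh ∈ ΓL ∩ ΓB → F (hessMat φ zh) (gradVec φ zh) (u zh) zh ≤ 0 ∨
        Blat (u zh) (gradVec φ zh) zh ∨ γB zh ⬝ᵥ gradVec φ zh ≤ βB zh)

/-- Viscosity supersolution: mirror image of `IsViscSubsol`. -/
def IsViscSupersol {n : ℕ} (K Kint ΓT ΓB ΓL : Set (Fin n → ℝ))
    (F : Matrix (Fin n) (Fin n) ℝ → (Fin n → ℝ) → ℝ → (Fin n → ℝ) → ℝ)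
    (γT γB : (Fin n → ℝ) → (Fin n → ℝ)) (βT βB : (Fin n → ℝ) → ℝ)
    (Blat : ℝ → (Fin n → ℝ) → (Fin n → ℝ) → Prop)
    (u : (Fin n → ℝ) → ℝ) : Prop :=
  LowerSemicontinuousOn u K ∧
  ∀ φ : (Fin n → ℝ) → ℝ, ContDiff ℝ 2 φ →
    ∀ zh ∈ K, (∀ z ∈ K, u zh - φ zh ≤ u z - φ z) →
      (zh ∈ Kint → 0 ≤ F (hessMat φ zh) (gradVec φ zh) (u zh) zh) ∧
      (zh ∈ ΓT \ ΓL → 0 ≤ F (hessMat φ zh) (gradVec φ zh) (u zh) zh ∨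
        βT zh ≤ γT zh ⬝ᵥ gradVec φ zh) ∧
      (zh ∈ ΓB \ ΓL → 0 ≤ F (hessMat φ zh) (gradVec φ zh) (u zh) zh ∨
        βB zh ≤ γB zh ⬝ᵥ gradVec φ zh) ∧
      (zh ∈ ΓL \ (ΓT ∪ ΓB) → 0 ≤ F (hessMat φ zh) (gradVec φ zh) (u zh) zh ∨
        Blat (u zh) (gradVec φ zh) zh) ∧
      (zh ∈ ΓL ∩ ΓT → 0 ≤ F (hessMat φ zh) (gradVec φ zh) (u zh) zh ∨
        Blat (u zh) (gradVec φ zh) zh ∨ βT zh ≤ γT zh ⬝ᵥ gradVec φ zh) ∧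
      (zh ∈ ΓL ∩ ΓB → 0 ≤ F (hessMat φ zh) (gradVec φ zh) (u zh) zh ∨
        Blat (u zh) (gradVec φ zh) zh ∨ βB zh ≤ γB zh ⬝ᵥ gradVec φ zh)

/-! At a maximum point of the upper semicontinuous `u - ψ̄` on the compact set `K`, if `u`
exceeded `ψ̄ + M`, monotonicity of `F` in its value argument would give
`F(D²ψ̄, Dψ̄, u, ·) > 0`, and the strict barrier inequalities rule out every boundary
alternative of the viscosity subsolution test; what remains is the interior alternative
`F ≤ 0`, a contradiction. The lower bound is the mirror argument at a minimum of `u - ψ̲`. -/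

lemma interior_alt_of_not_boundary_alts {X : Type*} {Kint ΓT ΓB ΓL : Set X} {z : X}
    {P T B L : Prop} (hz : z ∈ Kint ∪ ΓT ∪ ΓB ∪ ΓL)
    (h : (z ∈ Kint → P) ∧ (z ∈ ΓT \ ΓL → P ∨ T) ∧ (z ∈ ΓB \ ΓL → P ∨ B) ∧
      (z ∈ ΓL \ (ΓT ∪ ΓB) → P ∨ L) ∧ (z ∈ ΓL ∩ ΓT → P ∨ L ∨ T) ∧
      (z ∈ ΓL ∩ ΓB → P ∨ L ∨ B))
    (hT : z ∈ ΓT → ¬T) (hB : z ∈ ΓB → ¬B) (hL : z ∈ ΓL → ¬L) : P := by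
  obtain ⟨hint, hTop, hBot, hLat, hLT, hLB⟩ := h
  simp only [mem_union] at hz
  by_cases hzL : z ∈ ΓL
  · by_cases hzT : z ∈ ΓT
    · exact (hLT ⟨hzL, hzT⟩).resolve_right (not_or.2 ⟨hL hzL, hT hzT⟩)
    by_cases hzB : z ∈ ΓB
    · exact (hLB ⟨hzL, hzB⟩).resolve_right (not_or.2 ⟨hL hzL, hB hzB⟩)
    exact (hLat ⟨hzL, by simp [hzT, hzB]⟩).resolve_right (hL hzL)
  · rcases hz with ((hzI | hzT) | hzB) | hzL'
    · exact hint hzI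
    · exact (hTop ⟨hzT, hzL⟩).resolve_right (hT hzT)
    · exact (hBot ⟨hzB, hzL⟩).resolve_right (hB hzB)
    · exact absurd hzL' hzL

lemma monotone_of_proper {n : ℕ}
    {F : Matrix (Fin n) (Fin n) ℝ → (Fin n → ℝ) → ℝ → (Fin n → ℝ) → ℝ} {α : ℝ} (hα : 0 ≤ α)
    (hF : ∀ (X Y : Matrix (Fin n) (Fin n) ℝ) (p : Fin n → ℝ) (r s : ℝ)
      (z : Fin n → ℝ), (X - Y).PosSemidef → r ≤ s →
      F X p r z - α * r ≤ F Y p s z - α * s)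
    (X : Matrix (Fin n) (Fin n) ℝ) (p z : Fin n → ℝ) : Monotone fun r => F X p r z := by
  intro r s hrs
  have := hF X X p r s z (by simpa using PosSemidef.zero) hrs
  linarith [mul_le_mul_of_nonneg_left hrs hα]

section Comparison

variable {n : ℕ} {K Kint ΓT ΓB ΓL : Set (Fin n → ℝ)}
  {F : Matrix (Fin n) (Fin n) ℝ → (Fin n → ℝ) → ℝ → (Fin n → ℝ) → ℝ}
  {γT γB : (Fin n → ℝ) → (Fin n → ℝ)} {βT βB : (Fin n → ℝ) → ℝ}
  {Blat : ℝ → (Fin n → ℝ) → (Fin n → ℝ) → Prop} {u ψ : (Fin n → ℝ) → ℝ} {c : ℝ}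

theorem IsViscSubsol.le_of_strict_supersolution (hK : IsCompact K)
    (hcover : K ⊆ Kint ∪ ΓT ∪ ΓB ∪ ΓL) (hFmono : ∀ X p z, Monotone fun r => F X p r z)
    (hu : IsViscSubsol K Kint ΓT ΓB ΓL F γT γB βT βB Blat u) (hψ : ContDiff ℝ 2 ψ)
    (hFψ : ∀ z ∈ K, 0 < F (hessMat ψ z) (gradVec ψ z) (ψ z + c) z)
    (hTψ : ∀ z ∈ ΓT, βT z < γT z ⬝ᵥ gradVec ψ z)
    (hBψ : ∀ z ∈ ΓB, βB z < γB z ⬝ᵥ gradVec ψ z)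
    (hLψ : ∀ z ∈ ΓL, ∀ r : ℝ, ψ z + c ≤ r → ¬ Blat r (gradVec ψ z) z) :
    ∀ z ∈ K, u z ≤ ψ z + c := by
  intro z hz
  have husc : UpperSemicontinuousOn (fun w => u w + -ψ w) K :=
    hu.1.add hψ.continuous.neg.continuousOn.upperSemicontinuousOn
  obtain ⟨zh, hzhK, hmax⟩ := husc.exists_isMaxOn ⟨z, hz⟩ hK
  suffices u zh ≤ ψ zh + c by linarith [isMaxOn_iff.1 hmax z hz]
  by_contra! hgt
  have hFpos : 0 < F (hessMat ψ zh) (gradVec ψ zh) (u zh) zh :=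
    (hFψ zh hzhK).trans_le (hFmono _ _ _ hgt.le)
  refine hFpos.not_ge (interior_alt_of_not_boundary_alts (hcover hzhK)
    (hu.2 ψ hψ zh hzhK (isMaxOn_iff.1 hmax)) ?_ ?_ (fun hzL => hLψ zh hzL _ hgt.le))
  · exact fun hzT => (hTψ zh hzT).not_ge
  · exact fun hzB => (hBψ zh hzB).not_ge

theorem IsViscSupersol.ge_of_strict_subsolution (hK : IsCompact K)
    (hcover : K ⊆ Kint ∪ ΓT ∪ ΓB ∪ ΓL) (hFmono : ∀ X p z, Monotone fun r => F X p r z)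
    (hu : IsViscSupersol K Kint ΓT ΓB ΓL F γT γB βT βB Blat u) (hψ : ContDiff ℝ 2 ψ)
    (hFψ : ∀ z ∈ K, F (hessMat ψ z) (gradVec ψ z) (ψ z - c) z < 0)
    (hTψ : ∀ z ∈ ΓT, γT z ⬝ᵥ gradVec ψ z < βT z)
    (hBψ : ∀ z ∈ ΓB, γB z ⬝ᵥ gradVec ψ z < βB z)
    (hLψ : ∀ z ∈ ΓL, ∀ r : ℝ, r ≤ ψ z - c → ¬ Blat r (gradVec ψ z) z) :
    ∀ z ∈ K, ψ z - c ≤ u z := by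
  intro z hz
  have hlsc : LowerSemicontinuousOn (fun w => u w + -ψ w) K :=
    hu.1.add hψ.continuous.neg.continuousOn.lowerSemicontinuousOn
  obtain ⟨zh, hzhK, hmin⟩ := hlsc.exists_isMinOn ⟨z, hz⟩ hK
  suffices ψ zh - c ≤ u zh by linarith [isMinOn_iff.1 hmin z hz]
  by_contra! hlt
  have hFneg : F (hessMat ψ zh) (gradVec ψ zh) (u zh) zh < 0 :=
    (hFmono _ _ _ hlt.le).trans_lt (hFψ zh hzhK)
  refine hFneg.not_ge (interior_alt_of_not_boundary_alts (hcover hzhK)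
    (hu.2 ψ hψ zh hzhK (isMinOn_iff.1 hmin)) ?_ ?_ (fun hzL => hLψ zh hzL _ hlt.le))
  · exact fun hzT => (hTψ zh hzT).not_ge
  · exact fun hzB => (hBψ zh hzB).not_ge

end Comparison

theorem stmt_18_general {n : ℕ} (K Kint ΓT ΓB ΓL : Set (Fin n → ℝ))
    (hKcomp : IsCompact K)
    (hcover : K = Kint ∪ ΓT ∪ ΓB ∪ ΓL)
    (F : Matrix (Fin n) (Fin n) ℝ → (Fin n → ℝ) → ℝ → (Fin n → ℝ) → ℝ)
    (α : ℝ) (hα : 0 < α)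
    (hF : ∀ (X Y : Matrix (Fin n) (Fin n) ℝ) (p : Fin n → ℝ) (r s : ℝ)
      (z : Fin n → ℝ), (X - Y).PosSemidef → r ≤ s →
      F X p r z - α * r ≤ F Y p s z - α * s)
    (γT γB : (Fin n → ℝ) → (Fin n → ℝ)) (βT βB : (Fin n → ℝ) → ℝ)
    (BlatSub BlatSup : ℝ → (Fin n → ℝ) → (Fin n → ℝ) → Prop)
    (ψsup ψsub : (Fin n → ℝ) → ℝ) (M : ℝ)
    (hψsupC2 : ContDiff ℝ 2 ψsup) (hψsubC2 : ContDiff ℝ 2 ψsub)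
    -- ψ̄ + M is a classical strict supersolution:
    (hFsup : ∀ z ∈ K, 0 < F (hessMat ψsup z) (gradVec ψsup z) (ψsup z + M) z)
    (hTsup : ∀ z ∈ ΓT, βT z < γT z ⬝ᵥ gradVec ψsup z)
    (hBsup : ∀ z ∈ ΓB, βB z < γB z ⬝ᵥ gradVec ψsup z)
    (hLsup : ∀ z ∈ ΓL, ∀ r : ℝ, ψsup z + M ≤ r → ¬ BlatSub r (gradVec ψsup z) z)
    -- ψ̲ − M is a classical strict subsolution:
    (hFsub : ∀ z ∈ K, F (hessMat ψsub z) (gradVec ψsub z) (ψsub z - M) z < 0)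
    (hTsub : ∀ z ∈ ΓT, γT z ⬝ᵥ gradVec ψsub z < βT z)
    (hBsub : ∀ z ∈ ΓB, γB z ⬝ᵥ gradVec ψsub z < βB z)
    (hLsub : ∀ z ∈ ΓL, ∀ r : ℝ, r ≤ ψsub z - M → ¬ BlatSup r (gradVec ψsub z) z)
    -- sup-norm bounds for the barriers:
    (Cs Ci : ℝ) (hCs : ∀ z ∈ K, |ψsup z| ≤ Cs) (hCi : ∀ z ∈ K, |ψsub z| ≤ Ci)
    -- u is a viscosity solution:
    (u : (Fin n → ℝ) → ℝ)
    (husub : IsViscSubsol K Kint ΓT ΓB ΓL F γT γB βT βB BlatSub u)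
    (husup : IsViscSupersol K Kint ΓT ΓB ΓL F γT γB βT βB BlatSup u) :
    ∀ z ∈ K, (ψsub z - M ≤ u z ∧ u z ≤ ψsup z + M) ∧
      |u z| ≤ max Cs Ci + M := by
  intro z hz
  have hFmono := monotone_of_proper hα.le hF
  have hlow := husup.ge_of_strict_subsolution hKcomp hcover.subset hFmono hψsubC2 hFsub hTsub
    hBsub hLsub z hz
  have hupp := husub.le_of_strict_supersolution hKcomp hcover.subset hFmono hψsupC2 hFsup
    hTsup hBsup hLsup z hz
  refine ⟨⟨hlow, hupp⟩, abs_le.2 ⟨?_, ?_⟩⟩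
  · linarith [neg_abs_le (ψsub z), hCi z hz, le_max_right Cs Ci]
  · linarith [le_abs_self (ψsup z), hCs z hz, le_max_left Cs Ci]

/-- Barrier comparison: if `ψ̄ + M` and `ψ̲ − M` are classical *strict* super-
and subsolution barriers (strict interior inequalities via the proper,
degenerate elliptic operator `F`, strict oblique inequalities on the top and
bottom boundaries, and strict lateral inequalities), then any viscosity
solution `u` satisfies `ψ̲ − M ≤ u ≤ ψ̄ + M` on `K = cl Ω_ε`; in particular
`|u| ≤ max(‖ψ̄‖_∞, ‖ψ̲‖_∞) + M`. -/
theorem stmt_18 {n : ℕ} (K Kint ΓT ΓB ΓL : Set (Fin n → ℝ))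
    (hKcomp : IsCompact K)
    (hcover : K = Kint ∪ ΓT ∪ ΓB ∪ ΓL) (hTB : ΓT ∩ ΓB = ∅)
    (F : Matrix (Fin n) (Fin n) ℝ → (Fin n → ℝ) → ℝ → (Fin n → ℝ) → ℝ)
    (α : ℝ) (hα : 0 < α)
    (hF : ∀ (X Y : Matrix (Fin n) (Fin n) ℝ) (p : Fin n → ℝ) (r s : ℝ)
      (z : Fin n → ℝ), (X - Y).PosSemidef → r ≤ s →
      F X p r z - α * r ≤ F Y p s z - α * s)
    (γT γB : (Fin n → ℝ) → (Fin n → ℝ)) (βT βB : (Fin n → ℝ) → ℝ)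
    (BlatSub BlatSup : ℝ → (Fin n → ℝ) → (Fin n → ℝ) → Prop)
    (ψsup ψsub : (Fin n → ℝ) → ℝ) (M : ℝ)
    (hψsupC2 : ContDiff ℝ 2 ψsup) (hψsubC2 : ContDiff ℝ 2 ψsub)
    (hord : ∀ z ∈ K, ψsub z - M ≤ ψsup z + M)
    -- ψ̄ + M is a classical strict supersolution:
    (hFsup : ∀ z ∈ K, 0 < F (hessMat ψsup z) (gradVec ψsup z) (ψsup z + M) z)
    (hTsup : ∀ z ∈ ΓT, βT z < γT z ⬝ᵥ gradVec ψsup z)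
    (hBsup : ∀ z ∈ ΓB, βB z < γB z ⬝ᵥ gradVec ψsup z)
    (hLsup : ∀ z ∈ ΓL, ∀ r : ℝ, ψsup z + M ≤ r → ¬ BlatSub r (gradVec ψsup z) z)
    -- ψ̲ − M is a classical strict subsolution:
    (hFsub : ∀ z ∈ K, F (hessMat ψsub z) (gradVec ψsub z) (ψsub z - M) z < 0)
    (hTsub : ∀ z ∈ ΓT, γT z ⬝ᵥ gradVec ψsub z < βT z)
    (hBsub : ∀ z ∈ ΓB, γB z ⬝ᵥ gradVec ψsub z < βB z)
    (hLsub : ∀ z ∈ ΓL, ∀ r : ℝ, r ≤ ψsub z - M → ¬ BlatSup r (gradVec ψsub z) z)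
    -- sup-norm bounds for the barriers:
    (Cs Ci : ℝ) (hCs : ∀ z ∈ K, |ψsup z| ≤ Cs) (hCi : ∀ z ∈ K, |ψsub z| ≤ Ci)
    -- u is a viscosity solution:
    (u : (Fin n → ℝ) → ℝ)
    (husub : IsViscSubsol K Kint ΓT ΓB ΓL F γT γB βT βB BlatSub u)
    (husup : IsViscSupersol K Kint ΓT ΓB ΓL F γT γB βT βB BlatSup u) :
    ∀ z ∈ K, (ψsub z - M ≤ u z ∧ u z ≤ ψsup z + M) ∧
      |u z| ≤ max Cs Ci + M :=
  stmt_18_general K Kint ΓT ΓB ΓL hKcomp hcover F α hα hF γT γB βT βB BlatSub BlatSup ψsup ψsub M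
    hψsupC2 hψsubC2 hFsup hTsup hBsup hLsup hFsub hTsub hBsub hLsub Cs Ci hCs hCi u husub husup
end
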